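/- For real x, the boundary values of the real part of φ satisfy: if a < x < b then lim_{ε→0⁺} Re φ(x+iε) = 0 and lim_{ε→0⁺} Re φ(x−iε) = 0; if 0 < x < a then lim_{ε→0⁺} Re φ(x+iε) = φ̃(x) and lim_{ε→0⁺} Re φ(x−iε) = φ̃(x), where φ̃(x) is real for 0 < x < a; and if x > b then φ(x) is real and lim_{ε→0⁺} Re φ(x±iε) = φ(x). -/

import Mathlib

/-!
From the upper half-plane, each principal square root in `φ` extends continuously to the real
axis away from its branch point, with the principal value there (`√r = i √|r|` for `r < 0`);
from the lower half-plane it tends to the conjugate of that value. Writing both logarithms in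
`φ` as logarithms of quotients `(√u + √v) / (√u - √v)`, we have
`Re (z log w) = Re z · log ‖w‖ - Im z · arg w` with `arg` bounded, so on both sides
`Re φ(x ± iε)` tends to `x log ‖R₁(x)‖ - log ‖R₂(x)‖ = Re φ(x)`, where `R₁, R₂` are the two
quotients. It remains to evaluate `Re φ(x)`: for `a < x < b` each quotient has the form
`w / conj w`, hence modulus one; for `0 < x < a` all square roots are imaginary and the
quotients are the negatives of those of `φ̃(x)`.
-/

open Complex Finset Filter Topology

/-- `a := (1−√c)/(1+√c)`. -/
noncomputable def aconst (c : ℝ) : ℝ := (1 - Real.sqrt c) / (1 + Real.sqrt c)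

/-- `b := (1+√c)/(1−√c)`. -/
noncomputable def bconst (c : ℝ) : ℝ := (1 + Real.sqrt c) / (1 - Real.sqrt c)

/-- The principal branch of the complex square root. -/
noncomputable def csqrt (z : ℂ) : ℂ := z ^ (1 / 2 : ℂ)

/-- The function `φ(z)`, defined using principal branches. -/
noncomputable def phiFun (c : ℝ) (z : ℂ) : ℂ :=
  z * Complex.log ((csqrt ((bconst c : ℂ) * z - 1) + csqrt ((aconst c : ℂ) * z - 1)) /
      (csqrt ((bconst c : ℂ) * z - 1) - csqrt ((aconst c : ℂ) * z - 1))) -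
  Complex.log ((csqrt (z - (aconst c : ℂ)) + csqrt (z - (bconst c : ℂ))) /
      (csqrt (z - (aconst c : ℂ)) - csqrt (z - (bconst c : ℂ))))

/-- The function `φ̃(z)`, defined using principal branches. -/
noncomputable def phiTilde (c : ℝ) (z : ℂ) : ℂ :=
  z * Complex.log ((csqrt (1 - (aconst c : ℂ) * z) + csqrt (1 - (bconst c : ℂ) * z)) /
      (csqrt (1 - (aconst c : ℂ) * z) - csqrt (1 - (bconst c : ℂ) * z))) -
  Complex.log ((csqrt ((bconst c : ℂ) - z) + csqrt ((aconst c : ℂ) - z)) /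
      (csqrt ((bconst c : ℂ) - z) - csqrt ((aconst c : ℂ) - z)))

/-- The domain `ℂ ∖ (−∞, b]` of `φ`. -/
def phiDom (c : ℝ) : Set ℂ := {z : ℂ | ¬(z.im = 0 ∧ z.re ≤ bconst c)}

/-- The domain `ℂ ∖ ((−∞, 0] ∪ [a, ∞))` of `φ̃`. -/
def phiTildeDom (c : ℝ) : Set ℂ := {z : ℂ | ¬(z.im = 0 ∧ (z.re ≤ 0 ∨ aconst c ≤ z.re))}

/-- The function `φ′(z) = Log[(√(bz−1)+√(az−1))/(√(bz−1)−√(az−1))]`. -/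
noncomputable def phiDeriv (c : ℝ) (z : ℂ) : ℂ :=
  Complex.log ((csqrt ((bconst c : ℂ) * z - 1) + csqrt ((aconst c : ℂ) * z - 1)) /
      (csqrt ((bconst c : ℂ) * z - 1) - csqrt ((aconst c : ℂ) * z - 1)))

open ComplexConjugate

lemma sqrt_lt_one_of_lt_one {c : ℝ} (hc1 : c < 1) : Real.sqrt c < 1 :=
  (Real.sqrt_lt' one_pos).2 (by linarith)

lemma aconst_pos {c : ℝ} (hc1 : c < 1) : 0 < aconst c := by
  have := sqrt_lt_one_of_lt_one hc1
  exact div_pos (by linarith) (by positivity)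

lemma bconst_pos {c : ℝ} (hc1 : c < 1) : 0 < bconst c := by
  have := sqrt_lt_one_of_lt_one hc1
  exact div_pos (by positivity) (by linarith)

lemma aconst_lt_bconst {c : ℝ} (hc0 : 0 < c) (hc1 : c < 1) : aconst c < bconst c := by
  have hs0 : 0 < Real.sqrt c := Real.sqrt_pos.2 hc0
  have hs1 := sqrt_lt_one_of_lt_one hc1
  rw [aconst, bconst, div_lt_div_iff₀ (by linarith) (by linarith)]
  nlinarith

lemma aconst_mul_bconst {c : ℝ} (hc1 : c < 1) : aconst c * bconst c = 1 := by
  have hs1 := sqrt_lt_one_of_lt_one hc1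
  have hs0 := Real.sqrt_nonneg c
  rw [aconst, bconst, div_mul_div_comm, mul_comm (1 - _), div_self (by nlinarith)]

lemma csqrt_sq (w : ℂ) : csqrt w ^ 2 = w := by
  rw [csqrt, one_div]; exact cpow_ofNat_inv_pow w 2

lemma csqrt_ofReal_of_nonneg {r : ℝ} (hr : 0 ≤ r) : csqrt r = Real.sqrt r := by
  rw [csqrt, Real.sqrt_eq_rpow, Complex.ofReal_cpow hr]; norm_num

lemma csqrt_ofReal_of_nonpos {r : ℝ} (hr : r ≤ 0) : csqrt r = Real.sqrt (-r) * I := by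
  rw [csqrt, ofReal_cpow_of_nonpos hr, ← Complex.ofReal_neg, ← csqrt,
    csqrt_ofReal_of_nonneg (by linarith)]
  congr 1
  rw [show (Real.pi : ℂ) * I * (1 / 2) = (Real.pi / 2 : ℝ) * I by push_cast; ring, exp_mul_I,
    ← ofReal_cos, ← ofReal_sin]
  simp

lemma csqrt_conj {w : ℂ} (hw : w.arg ≠ Real.pi) : csqrt (conj w) = conj (csqrt w) := by
  rw [csqrt, conj_cpow _ _ hw, csqrt, map_div₀, map_one, map_ofNat]

lemma continuousWithinAt_csqrt {w : ℂ} (hw : w ≠ 0) :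
    ContinuousWithinAt csqrt {z | 0 ≤ z.im} w := by
  by_cases hslit : w ∈ slitPlane
  · exact (continuousAt_cpow_const hslit).continuousWithinAt
  · obtain ⟨hre, him⟩ : w.re < 0 ∧ w.im = 0 := by
      rw [mem_slitPlane_iff, not_or, not_lt, not_not] at hslit
      exact ⟨lt_of_le_of_ne hslit.1 fun h => hw (Complex.ext h (by simpa using hslit.2)), hslit.2⟩
    have hexp : ContinuousWithinAt (fun z => exp (log z * (1 / 2))) {z | 0 ≤ z.im} w :=
      continuous_exp.continuousAt.comp_continuousWithinAt
        ((continuousWithinAt_log_of_re_neg_of_im_zero hre him).mul continuousWithinAt_const)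
    refine hexp.congr_of_eventuallyEq ?_ (cpow_def_of_ne_zero hw _)
    filter_upwards [nhdsWithin_le_nhds (eventually_ne_nhds hw)] with z hz
    exact cpow_def_of_ne_zero hz _

noncomputable def sqrtQuot (u v : ℂ) : ℂ := (csqrt u + csqrt v) / (csqrt u - csqrt v)

lemma csqrt_add_csqrt_ne_zero {u v : ℂ} (h : u ≠ v) : csqrt u + csqrt v ≠ 0 := by
  intro hsum
  apply h
  rw [← csqrt_sq u, ← csqrt_sq v, eq_neg_of_add_eq_zero_left hsum, neg_sq]

lemma csqrt_sub_csqrt_ne_zero {u v : ℂ} (h : u ≠ v) : csqrt u - csqrt v ≠ 0 := by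
  intro hdiff
  apply h
  rw [← csqrt_sq u, ← csqrt_sq v, sub_eq_zero.1 hdiff]

lemma sqrtQuot_ne_zero {u v : ℂ} (h : u ≠ v) : sqrtQuot u v ≠ 0 :=
  div_ne_zero (csqrt_add_csqrt_ne_zero h) (csqrt_sub_csqrt_ne_zero h)

lemma sqrtQuot_conj {u v : ℂ} (hu : u.im ≠ 0) (hv : v.im ≠ 0) :
    sqrtQuot (conj u) (conj v) = conj (sqrtQuot u v) := by
  have harg : ∀ {w : ℂ}, w.im ≠ 0 → w.arg ≠ Real.pi := fun hw h => hw (arg_eq_pi_iff.1 h).2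
  rw [sqrtQuot, sqrtQuot, csqrt_conj (harg hu), csqrt_conj (harg hv), map_div₀, map_add, map_sub]

lemma tendsto_sqrtQuot {α : Type*} {l : Filter α} {u v : α → ℂ} {u₀ v₀ : ℂ}
    (hu : Tendsto u l (𝓝[{z | 0 ≤ z.im}] u₀)) (hv : Tendsto v l (𝓝[{z | 0 ≤ z.im}] v₀))
    (hu₀ : u₀ ≠ 0) (hv₀ : v₀ ≠ 0) (huv : u₀ ≠ v₀) :
    Tendsto (fun i => sqrtQuot (u i) (v i)) l (𝓝 (sqrtQuot u₀ v₀)) := by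
  have hcu := (continuousWithinAt_csqrt hu₀).tendsto.comp hu
  have hcv := (continuousWithinAt_csqrt hv₀).tendsto.comp hv
  exact (hcu.add hcv).div (hcu.sub hcv) (csqrt_sub_csqrt_ne_zero huv)

lemma sqrtQuot_ofReal_of_nonpos {u v : ℝ} (hu : u ≤ 0) (hv : v ≤ 0) :
    sqrtQuot u v = -sqrtQuot (-v : ℝ) (-u : ℝ) := by
  rw [sqrtQuot, sqrtQuot, csqrt_ofReal_of_nonpos hu, csqrt_ofReal_of_nonpos hv,
    csqrt_ofReal_of_nonneg (neg_nonneg.2 hu), csqrt_ofReal_of_nonneg (neg_nonneg.2 hv),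
    ← add_mul, ← sub_mul, mul_div_mul_right _ _ I_ne_zero, ← div_neg, neg_sub,
    add_comm (Real.sqrt (-v) : ℂ)]

lemma norm_sqrtQuot_ofReal_of_nonneg_of_neg {u v : ℝ} (hu : 0 ≤ u) (hv : v < 0) :
    ‖sqrtQuot u v‖ = 1 := by
  set w : ℂ := Real.sqrt u + Real.sqrt (-v) * I
  have hw : w ≠ 0 := fun h => by
    have := congrArg im h
    simp [w, Real.sqrt_eq_zero', hv.not_ge] at this
  have hconj : (Real.sqrt u : ℂ) - Real.sqrt (-v) * I = conj w := by simp [w, sub_eq_add_neg]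
  rw [sqrtQuot, csqrt_ofReal_of_nonneg hu, csqrt_ofReal_of_nonpos hv.le, hconj, norm_div,
    norm_conj, div_self (norm_ne_zero_iff.2 hw)]

lemma arg_sqrtQuot_ofReal {s t : ℝ} (ht : 0 ≤ t) (hts : t < s) : arg (sqrtQuot s t) = 0 := by
  have hsqrt : Real.sqrt t < Real.sqrt s := Real.sqrt_lt_sqrt ht hts
  have hpos : 0 < (Real.sqrt s + Real.sqrt t) / (Real.sqrt s - Real.sqrt t) :=
    div_pos (by linarith [Real.sqrt_nonneg t]) (by linarith)
  rw [sqrtQuot, csqrt_ofReal_of_nonneg (ht.trans hts.le), csqrt_ofReal_of_nonneg ht]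
  exact_mod_cast arg_ofReal_of_nonneg hpos.le

lemma re_ofReal_mul_log_sub_log (x : ℝ) (w₁ w₂ : ℂ) :
    ((x : ℂ) * log w₁ - log w₂).re = x * Real.log ‖w₁‖ - Real.log ‖w₂‖ := by
  simp [log_re]

lemma im_ofReal_mul_log_sub_log (x : ℝ) (w₁ w₂ : ℂ) :
    ((x : ℂ) * log w₁ - log w₂).im = x * arg w₁ - arg w₂ := by
  simp [log_im]

lemma tendsto_re_mul_log_sub_log {α : Type*} {l : Filter α} {z w₁ w₂ : α → ℂ} {x : ℝ}
    {L₁ L₂ : ℂ} (hz : Tendsto z l (𝓝 x)) (hw₁ : Tendsto w₁ l (𝓝 L₁))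
    (hw₂ : Tendsto w₂ l (𝓝 L₂)) (hL₁ : L₁ ≠ 0) (hL₂ : L₂ ≠ 0) :
    Tendsto (fun i => (z i * log (w₁ i) - log (w₂ i)).re) l
      (𝓝 (x * Real.log ‖L₁‖ - Real.log ‖L₂‖)) := by
  have hre : Tendsto (fun i => (z i).re) l (𝓝 x) := by
    simpa [Function.comp_def] using (continuous_re.tendsto _).comp hz
  have him : Tendsto (fun i => (z i).im) l (𝓝 0) := by
    simpa [Function.comp_def] using (continuous_im.tendsto _).comp hz
  have hbdd : Tendsto (fun i => (z i).im * arg (w₁ i)) l (𝓝 0) :=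
    him.zero_mul_isBoundedUnder_le ⟨Real.pi, eventually_map.2 (.of_forall fun i => by
      simpa using abs_arg_le_pi (w₁ i))⟩
  have hlog₁ := hw₁.norm.log (norm_ne_zero_iff.2 hL₁)
  have hlog₂ := hw₂.norm.log (norm_ne_zero_iff.2 hL₂)
  simpa only [sub_re, mul_re, log_re, log_im, sub_zero] using ((hre.mul hlog₁).sub hbdd).sub hlog₂

lemma phiFun_eq_sqrtQuot (c : ℝ) (z : ℂ) :
    phiFun c z = z * log (sqrtQuot (bconst c * z - 1) (aconst c * z - 1)) -
      log (sqrtQuot (z - aconst c) (z - bconst c)) := rfl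

lemma phiTilde_eq_sqrtQuot (c : ℝ) (z : ℂ) :
    phiTilde c z = z * log (sqrtQuot (1 - aconst c * z) (1 - bconst c * z)) -
      log (sqrtQuot (bconst c - z) (aconst c - z)) := rfl

lemma tendsto_add_mul_I_nhdsWithin_upper (x : ℝ) :
    Tendsto (fun ε : ℝ => (x : ℂ) + ε * I) (𝓝[>] 0) (𝓝[{z | 0 < z.im}] (x : ℂ)) := by
  refine tendsto_nhdsWithin_iff.2
    ⟨?_, eventually_nhdsWithin_of_forall fun ε hε => by simpa using hε⟩
  have hcont : Continuous fun ε : ℝ => (x : ℂ) + ε * I := by fun_prop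
  simpa using (hcont.tendsto 0).mono_left nhdsWithin_le_nhds

lemma tendsto_mul_sub_nhdsWithin_upper {k : ℝ} (hk : 0 < k) (m : ℝ) (w : ℂ) :
    Tendsto (fun z : ℂ => k * z - m) (𝓝[{z | 0 < z.im}] w) (𝓝[{z | 0 ≤ z.im}] (k * w - m)) := by
  refine tendsto_nhdsWithin_iff.2 ⟨?_, eventually_nhdsWithin_of_forall fun z hz => ?_⟩
  · have hcont : Continuous fun z : ℂ => k * z - m := by fun_prop
    exact (hcont.tendsto w).mono_left nhdsWithin_le_nhds
  · have hz : 0 < z.im := hz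
    simpa using mul_nonneg hk.le hz.le

section boundary

variable {c : ℝ}

lemma tendsto_sqrtQuot_phiFun_upper (hc0 : 0 < c) (hc1 : c < 1) {x : ℝ} (hx0 : x ≠ 0)
    (hxa : x ≠ aconst c) (hxb : x ≠ bconst c) :
    Tendsto (fun z => sqrtQuot (bconst c * z - 1) (aconst c * z - 1)) (𝓝[{z | 0 < z.im}] (x : ℂ))
        (𝓝 (sqrtQuot (bconst c * x - 1) (aconst c * x - 1))) ∧
      Tendsto (fun z => sqrtQuot (z - aconst c) (z - bconst c)) (𝓝[{z | 0 < z.im}] (x : ℂ))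
        (𝓝 (sqrtQuot (x - aconst c) (x - bconst c))) ∧
      sqrtQuot (bconst c * x - 1) (aconst c * x - 1) ≠ 0 ∧
      sqrtQuot (x - aconst c) (x - bconst c) ≠ 0 := by
  have ha := aconst_pos hc1
  have hab := aconst_lt_bconst hc0 hc1
  have hmul := aconst_mul_bconst hc1
  have hb := bconst_pos hc1
  have h₁ : bconst c * x - 1 ≠ 0 := fun h => hxa (by linear_combination aconst c * h - x * hmul)
  have h₂ : aconst c * x - 1 ≠ 0 := fun h => hxb (by linear_combination bconst c * h - x * hmul)
  have h₁₂ : bconst c * x - 1 ≠ aconst c * x - 1 := fun h =>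
    hx0 ((mul_eq_zero.1 (by linear_combination h : (bconst c - aconst c) * x = 0)).resolve_left
      (sub_ne_zero.2 hab.ne'))
  have hs : ∀ m : ℝ, Tendsto (fun z : ℂ => z - m) (𝓝[{z | 0 < z.im}] (x : ℂ))
      (𝓝[{z | 0 ≤ z.im}] (x - m)) := fun m => by
    simpa using tendsto_mul_sub_nhdsWithin_upper one_pos m x
  have h₁₂' : (bconst c * x - 1 : ℂ) ≠ aconst c * x - 1 := by exact_mod_cast h₁₂
  have hab' : (x - aconst c : ℂ) ≠ x - bconst c := by simpa using hab.ne
  exact ⟨tendsto_sqrtQuot (tendsto_mul_sub_nhdsWithin_upper hb 1 x)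
      (tendsto_mul_sub_nhdsWithin_upper ha 1 x) (by exact_mod_cast h₁) (by exact_mod_cast h₂) h₁₂',
    tendsto_sqrtQuot (hs _) (hs _) (by exact_mod_cast sub_ne_zero.2 hxa)
      (by exact_mod_cast sub_ne_zero.2 hxb) hab',
    sqrtQuot_ne_zero h₁₂', sqrtQuot_ne_zero hab'⟩

lemma sqrtQuot_phiFun_conj (hc1 : c < 1) {z : ℂ} (hz : z.im ≠ 0) :
    sqrtQuot (bconst c * conj z - 1) (aconst c * conj z - 1) =
        conj (sqrtQuot (bconst c * z - 1) (aconst c * z - 1)) ∧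
      sqrtQuot (conj z - aconst c) (conj z - bconst c) =
        conj (sqrtQuot (z - aconst c) (z - bconst c)) := by
  have ha := aconst_pos hc1
  have hb := bconst_pos hc1
  constructor
  · rw [← sqrtQuot_conj (by simpa using ⟨hb.ne', hz⟩) (by simpa using ⟨ha.ne', hz⟩)]
    simp
  · rw [← sqrtQuot_conj (by simpa using hz) (by simpa using hz)]
    simp

theorem tendsto_re_phiFun_boundary (hc0 : 0 < c) (hc1 : c < 1) {x : ℝ} (hx0 : x ≠ 0)
    (hxa : x ≠ aconst c) (hxb : x ≠ bconst c) :
    Tendsto (fun ε : ℝ => (phiFun c (x + ε * I)).re) (𝓝[>] 0) (𝓝 (phiFun c x).re) ∧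
      Tendsto (fun ε : ℝ => (phiFun c (x - ε * I)).re) (𝓝[>] 0) (𝓝 (phiFun c x).re) := by
  obtain ⟨h₁, h₂, hne₁, hne₂⟩ := tendsto_sqrtQuot_phiFun_upper hc0 hc1 hx0 hxa hxb
  have hpath := tendsto_add_mul_I_nhdsWithin_upper x
  have hpath' : Tendsto (fun ε : ℝ => (x : ℂ) + ε * I) (𝓝[>] 0) (𝓝 (x : ℂ)) :=
    hpath.mono_right nhdsWithin_le_nhds
  rw [phiFun_eq_sqrtQuot, re_ofReal_mul_log_sub_log]
  refine ⟨tendsto_re_mul_log_sub_log hpath' (h₁.comp hpath) (h₂.comp hpath) hne₁ hne₂, ?_⟩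
  -- Below the real axis every square root is conjugated, and conjugation preserves norms.
  have hlow : ∀ ε : ℝ, (x : ℂ) - ε * I = conj ((x : ℂ) + ε * I) := fun ε => by
    simp [sub_eq_add_neg]
  have hconj : ∀ᶠ ε : ℝ in 𝓝[>] 0, ((x : ℂ) + ε * I).im ≠ 0 :=
    eventually_nhdsWithin_of_forall fun ε (hε : 0 < ε) => by simpa using hε.ne'
  simp_rw [hlow]
  rw [← norm_conj (sqrtQuot _ _), ← norm_conj (sqrtQuot (x - aconst c : ℂ) _)]
  refine tendsto_re_mul_log_sub_log
    (by simpa [Function.comp_def] using (continuous_conj.tendsto _).comp hpath')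
    (((continuous_conj.tendsto _).comp (h₁.comp hpath)).congr' ?_)
    (((continuous_conj.tendsto _).comp (h₂.comp hpath)).congr' ?_)
    (by simpa using hne₁) (by simpa using hne₂)
  · exact hconj.mono fun ε hε => (sqrtQuot_phiFun_conj hc1 hε).1.symm
  · exact hconj.mono fun ε hε => (sqrtQuot_phiFun_conj hc1 hε).2.symm

lemma re_phiFun_of_mem_Ioo (hc1 : c < 1) {x : ℝ} (hax : aconst c < x) (hxb : x < bconst c) :
    (phiFun c x).re = 0 := by
  have ha := aconst_pos hc1
  have hmul := aconst_mul_bconst hc1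
  have h₁ := norm_sqrtQuot_ofReal_of_nonneg_of_neg (u := bconst c * x - 1) (v := aconst c * x - 1)
    (by nlinarith) (by nlinarith)
  have h₂ := norm_sqrtQuot_ofReal_of_nonneg_of_neg (u := x - aconst c) (v := x - bconst c)
    (by linarith) (by linarith)
  push_cast at h₁ h₂
  rw [phiFun_eq_sqrtQuot, re_ofReal_mul_log_sub_log, h₁, h₂]
  simp

lemma re_phiFun_eq_re_phiTilde (hc0 : 0 < c) (hc1 : c < 1) {x : ℝ} (hx0 : 0 < x)
    (hxa : x < aconst c) :
    (phiFun c x).re = (phiTilde c x).re := by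
  have hab := aconst_lt_bconst hc0 hc1
  have hmul := aconst_mul_bconst hc1
  have h₁ := sqrtQuot_ofReal_of_nonpos (u := bconst c * x - 1) (v := aconst c * x - 1)
    (by nlinarith) (by nlinarith)
  have h₂ := sqrtQuot_ofReal_of_nonpos (u := x - aconst c) (v := x - bconst c)
    (by linarith) (by linarith)
  rw [neg_sub, neg_sub] at h₁ h₂
  push_cast at h₁ h₂
  rw [phiFun_eq_sqrtQuot, phiTilde_eq_sqrtQuot, re_ofReal_mul_log_sub_log,
    re_ofReal_mul_log_sub_log, h₁, h₂, norm_neg, norm_neg]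

lemma im_phiTilde_of_mem_Ioo (hc0 : 0 < c) (hc1 : c < 1) {x : ℝ} (hx0 : 0 < x)
    (hxa : x < aconst c) :
    (phiTilde c x).im = 0 := by
  have hab := aconst_lt_bconst hc0 hc1
  have hmul := aconst_mul_bconst hc1
  have h₁ := arg_sqrtQuot_ofReal (s := 1 - aconst c * x) (t := 1 - bconst c * x)
    (by nlinarith) (by nlinarith)
  have h₂ := arg_sqrtQuot_ofReal (s := bconst c - x) (t := aconst c - x)
    (by linarith) (by linarith)
  push_cast at h₁ h₂
  rw [phiTilde_eq_sqrtQuot, im_ofReal_mul_log_sub_log, h₁, h₂]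
  simp

lemma im_phiFun_of_bconst_lt (hc0 : 0 < c) (hc1 : c < 1) {x : ℝ} (hbx : bconst c < x) :
    (phiFun c x).im = 0 := by
  have ha := aconst_pos hc1
  have hab := aconst_lt_bconst hc0 hc1
  have hmul := aconst_mul_bconst hc1
  have h₁ := arg_sqrtQuot_ofReal (s := bconst c * x - 1) (t := aconst c * x - 1)
    (by nlinarith) (by nlinarith)
  have h₂ := arg_sqrtQuot_ofReal (s := x - aconst c) (t := x - bconst c)
    (by linarith) (by linarith)
  push_cast at h₁ h₂
  rw [phiFun_eq_sqrtQuot, im_ofReal_mul_log_sub_log, h₁, h₂]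
  simp

end boundary

/-- Boundary values of `Re φ` on the positive real axis from above and below. -/
theorem phiFun_boundary_re (c : ℝ) (hc0 : 0 < c) (hc1 : c < 1) :
    (∀ x : ℝ, aconst c < x → x < bconst c →
      Tendsto (fun ε : ℝ => (phiFun c ((x : ℂ) + (ε : ℂ) * Complex.I)).re)
        (𝓝[>] 0) (𝓝 0) ∧
      Tendsto (fun ε : ℝ => (phiFun c ((x : ℂ) - (ε : ℂ) * Complex.I)).re)
        (𝓝[>] 0) (𝓝 0)) ∧
    (∀ x : ℝ, 0 < x → x < aconst c →
      (phiTilde c (x : ℂ)).im = 0 ∧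
      Tendsto (fun ε : ℝ => (phiFun c ((x : ℂ) + (ε : ℂ) * Complex.I)).re)
        (𝓝[>] 0) (𝓝 ((phiTilde c (x : ℂ)).re)) ∧
      Tendsto (fun ε : ℝ => (phiFun c ((x : ℂ) - (ε : ℂ) * Complex.I)).re)
        (𝓝[>] 0) (𝓝 ((phiTilde c (x : ℂ)).re))) ∧
    (∀ x : ℝ, bconst c < x →
      (phiFun c (x : ℂ)).im = 0 ∧
      Tendsto (fun ε : ℝ => (phiFun c ((x : ℂ) + (ε : ℂ) * Complex.I)).re)
        (𝓝[>] 0) (𝓝 ((phiFun c (x : ℂ)).re)) ∧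
      Tendsto (fun ε : ℝ => (phiFun c ((x : ℂ) - (ε : ℂ) * Complex.I)).re)
        (𝓝[>] 0) (𝓝 ((phiFun c (x : ℂ)).re))) := by
  have ha := aconst_pos hc1
  have hab := aconst_lt_bconst hc0 hc1
  refine ⟨fun x hax hxb => ?_, fun x hx0 hxa => ?_, fun x hbx => ?_⟩
  · have h := tendsto_re_phiFun_boundary hc0 hc1 (by linarith) hax.ne' hxb.ne
    rwa [re_phiFun_of_mem_Ioo hc1 hax hxb] at h
  · rw [← re_phiFun_eq_re_phiTilde hc0 hc1 hx0 hxa]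
    exact ⟨im_phiTilde_of_mem_Ioo hc0 hc1 hx0 hxa,
      tendsto_re_phiFun_boundary hc0 hc1 hx0.ne' hxa.ne (by linarith)⟩
  · exact ⟨im_phiFun_of_bconst_lt hc0 hc1 hbx,
      tendsto_re_phiFun_boundary hc0 hc1 (by linarith) (by linarith) hbx.ne'⟩
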